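/- Let m ≥ 1, n = 2^m, let S be a nonempty subset of ZMod n, and let f ∈ S. Set w = |{ν₂(f − g) : g ∈ S, g ≠ f}|. Then there exists G : ZMod n → ℂ whose discrete Fourier transform satisfies Ĝ(f) = 1 and Ĝ(g) = 0 for every g ∈ S with g ≠ f, and whose support has cardinality exactly 2^w. -/

import Mathlib

open scoped BigOperators

/-- The one-dimensional discrete Fourier transform on `ZMod n`:
`x̂(f) = ∑_t x(t) · e^{-2πi·f·t/n}` where `f·t` is computed in `ZMod n`. -/
noncomputable def dft1 (n : ℕ) [NeZero n] (x : ZMod n → ℂ) : ZMod n → ℂ :=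
  fun f => ∑ t : ZMod n, x t *
    Complex.exp (-(2 * (Real.pi : ℂ) * Complex.I) * (((f * t : ZMod n)).val : ℂ) / (n : ℂ))

/-!
Put `D = {m - 1 - ν₂(f - g) : g ∈ S, g ≠ f}` and let `G` be `2⁻ʷ · e(f t)` on the `2ʷ` subset sums
of `{2 ^ j : j ∈ D}` and `0` elsewhere, where `e(x) = exp (2πi x / 2ᵐ)`. Summing over subsets, the
transform factors as `Ĝ(g) = 2⁻ʷ ∏_{j ∈ D} (1 + e((f - g) 2 ^ j))`. At `g = f` every factor is `2`;
for `g ≠ f` the factor with `j = m - 1 - ν₂(f - g)` vanishes, because `(f - g) 2 ^ j = 2 ^ (m - 1)`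
and `e(2 ^ (m - 1)) = -1`.
-/

open Finset ZMod

lemma AddChar.map_sum_eq_prod {ι A M : Type*} [AddCommMonoid A] [CommMonoid M]
    (ψ : AddChar A M) (s : Finset ι) (a : ι → A) : ψ (∑ i ∈ s, a i) = ∏ i ∈ s, ψ (a i) := by
  classical
  induction s using Finset.induction_on with
  | empty => simp
  | insert i s hi ih => rw [sum_insert hi, prod_insert hi, AddChar.map_add_eq_mul, ih]

lemma AddChar.sum_powerset_map_sum {ι A M : Type*} [AddCommMonoid A] [CommSemiring M]
    (ψ : AddChar A M) (s : Finset ι) (a : ι → A) :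
    ∑ t ∈ s.powerset, ψ (∑ i ∈ t, a i) = ∏ i ∈ s, (ψ (a i) + 1) := by
  classical
  simp only [prod_add (fun i => ψ (a i)) (fun _ => 1), prod_const_one, mul_one,
    AddChar.map_sum_eq_prod]

section
variable {N : ℕ} [NeZero N]

lemma dft1_eq_dft (x : ZMod N → ℂ) : dft1 N x = 𝓕 x := by
  ext g
  refine sum_congr rfl fun t _ => ?_
  rw [smul_eq_mul, mul_comm, AddChar.map_neg_eq_inv, stdAddChar_apply, toCircle_apply,
    ← Complex.exp_neg, mul_comm t g, neg_mul, neg_div]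

lemma dft_indicator_stdAddChar_mul (T : Finset (ZMod N)) (f g : ZMod N) :
    𝓕 ((T : Set (ZMod N)).indicator fun t => stdAddChar (f * t)) g =
      ∑ t ∈ T, stdAddChar ((f - g) * t) := by
  simp only [dft_apply, Set.indicator_apply, mem_coe, smul_eq_mul, mul_ite, mul_zero, sum_ite_mem,
    univ_inter]
  refine sum_congr rfl fun t _ => ?_
  rw [← AddChar.map_add_eq_mul]
  congr 1
  ring

lemma stdAddChar_half {k : ℕ} (hN : N = 2 * k) : stdAddChar (k : ZMod N) = -1 := by
  have hk : (k : ℂ) ≠ 0 := by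
    have := NeZero.ne N
    exact_mod_cast (by omega : k ≠ 0)
  rw [stdAddChar_apply, toCircle_natCast, hN]
  push_cast
  rw [show 2 * (Real.pi : ℂ) * Complex.I * k / (2 * k) = Real.pi * Complex.I by field_simp]
  exact Complex.exp_pi_mul_I

end

lemma injOn_sum_two_pow {m : ℕ} {D : Finset ℕ} (hD : ∀ j ∈ D, j < m) :
    Set.InjOn (fun A : Finset ℕ => ∑ j ∈ A, (2 : ZMod (2 ^ m)) ^ j) D.powerset := by
  have hval : ∀ C ∈ (D.powerset : Set (Finset ℕ)),
      (∑ j ∈ C, (2 : ZMod (2 ^ m)) ^ j).val = ∑ j ∈ C, 2 ^ j := fun C hC => by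
    rw [← val_cast_of_lt (Nat.geomSum_lt le_rfl fun j hj => hD j (mem_powerset.mp hC hj))]
    push_cast
    rfl
  intro A hA B hB hAB
  exact geomSum_injective le_rfl <|
    (hval A hA).symm.trans ((congrArg ZMod.val hAB).trans (hval B hB))

lemma natCast_odd_mul_two_pow_pred {m u : ℕ} (hm : 0 < m) (hu : Odd u) :
    (u : ZMod (2 ^ m)) * 2 ^ (m - 1) = 2 ^ (m - 1) := by
  obtain ⟨r, rfl⟩ := hu
  have h : (2 : ZMod (2 ^ m)) ^ m = 0 := by exact_mod_cast ZMod.natCast_self (2 ^ m)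
  calc ((2 * r + 1 : ℕ) : ZMod (2 ^ m)) * 2 ^ (m - 1) = r * 2 ^ (m - 1 + 1) + 2 ^ (m - 1) := by
        push_cast; ring
    _ = 2 ^ (m - 1) := by rw [Nat.sub_add_cancel hm, h, mul_zero, zero_add]

lemma padicValNat_two_val_lt_and_mul_two_pow_eq {m : ℕ} {x : ZMod (2 ^ m)} (hx : x ≠ 0) :
    padicValNat 2 x.val < m ∧ x * 2 ^ (m - 1 - padicValNat 2 x.val) = 2 ^ (m - 1) := by
  obtain ⟨e, u, hu, hxu⟩ := Nat.exists_eq_two_pow_mul_odd ((val_ne_zero x).mpr hx)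
  have hval : padicValNat 2 x.val = e := by
    rw [hxu, padicValNat.mul (by positivity) (by rintro rfl; simp at hu), padicValNat.prime_pow,
      padicValNat.eq_zero_of_not_dvd hu.not_two_dvd_nat, add_zero]
  have he : e < m := by
    have : 2 ^ e < 2 ^ m := calc
      2 ^ e ≤ x.val := hxu ▸ Nat.le_mul_of_pos_right _ hu.pos
      _ < 2 ^ m := val_lt x
    exact (Nat.pow_lt_pow_iff_right (by norm_num)).mp this
  refine ⟨hval ▸ he, ?_⟩
  rw [hval, ← natCast_zmod_val x, hxu]
  push_cast
  calc (2 : ZMod (2 ^ m)) ^ e * u * 2 ^ (m - 1 - e) = u * 2 ^ (e + (m - 1 - e)) := by ring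
    _ = 2 ^ (m - 1) := by rw [show e + (m - 1 - e) = m - 1 by omega,
      natCast_odd_mul_two_pow_pred (by omega) hu]

def twoPowSubsetSums (m : ℕ) (D : Finset ℕ) : Finset (ZMod (2 ^ m)) :=
  D.powerset.image fun A => ∑ j ∈ A, 2 ^ j

section
variable {m : ℕ} {D : Finset ℕ}

lemma card_twoPowSubsetSums (hD : ∀ j ∈ D, j < m) : (twoPowSubsetSums m D).card = 2 ^ D.card := by
  rw [twoPowSubsetSums, card_image_of_injOn (injOn_sum_two_pow hD), card_powerset]

lemma sum_stdAddChar_mul_twoPowSubsetSums (hD : ∀ j ∈ D, j < m) (x : ZMod (2 ^ m)) :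
    ∑ t ∈ twoPowSubsetSums m D, stdAddChar (x * t) = ∏ j ∈ D, (stdAddChar (x * 2 ^ j) + 1) := by
  rw [twoPowSubsetSums, sum_image (injOn_sum_two_pow hD), ← AddChar.sum_powerset_map_sum]
  simp only [mul_sum]

lemma dft_smul_indicator_twoPowSubsetSums (hD : ∀ j ∈ D, j < m) (f g : ZMod (2 ^ m)) :
    𝓕 ((2 ^ D.card : ℂ)⁻¹ • (twoPowSubsetSums m D : Set (ZMod (2 ^ m))).indicator
      fun t => stdAddChar (f * t)) g =
      (2 ^ D.card : ℂ)⁻¹ * ∏ j ∈ D, (stdAddChar ((f - g) * 2 ^ j) + 1) := by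
  rw [_root_.map_smul, Pi.smul_apply, dft_indicator_stdAddChar_mul,
    sum_stdAddChar_mul_twoPowSubsetSums hD, smul_eq_mul]

lemma ncard_support_smul_indicator_twoPowSubsetSums (hD : ∀ j ∈ D, j < m) (f : ZMod (2 ^ m)) :
    (Function.support ((2 ^ D.card : ℂ)⁻¹ • (twoPowSubsetSums m D : Set (ZMod (2 ^ m))).indicator
      fun t => stdAddChar (f * t))).ncard = 2 ^ D.card := by
  rw [Function.support_const_smul_of_ne_zero _ _ (by simp), Set.support_indicator,
    Set.inter_eq_left.mpr fun t _ => Function.mem_support.mpr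
      (stdAddChar_apply (f * t) ▸ Circle.coe_ne_zero _), Set.ncard_coe_finset,
    card_twoPowSubsetSums hD]

end

theorem stmt1_general (m : ℕ) (n : ℕ) (hn : n = 2 ^ m) [NeZero n]
    (S : Finset (ZMod n)) (f : ZMod n)
    (w : ℕ)
    (hw : w = ((S.erase f).image (fun g => padicValNat 2 ((f - g : ZMod n).val))).card) :
    ∃ G : ZMod n → ℂ,
      dft1 n G f = 1 ∧ (∀ g ∈ S, g ≠ f → dft1 n G g = 0) ∧
      (Function.support G).ncard = 2 ^ w := by
  subst hn
  set V := (S.erase f).image fun g => padicValNat 2 (f - g).val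
  have hV : ∀ e ∈ V, e < m := by
    simp only [V, mem_image, mem_erase]
    rintro _ ⟨g, ⟨hgf, -⟩, rfl⟩
    exact (padicValNat_two_val_lt_and_mul_two_pow_eq (sub_ne_zero.mpr hgf.symm)).1
  set D := V.image (m - 1 - ·)
  have hD : ∀ j ∈ D, j < m := by
    simp only [D, mem_image]
    rintro _ ⟨e, he, rfl⟩
    have := hV e he
    omega
  have hDw : D.card = w := hw ▸ card_image_of_injOn fun a ha b hb h => by
    have := hV a ha; have := hV b hb; omega
  refine ⟨(2 ^ D.card : ℂ)⁻¹ • (twoPowSubsetSums m D : Set _).indicator fun t => stdAddChar (f * t),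
    ?_, fun g hg hgf => ?_, ?_⟩
  · rw [dft1_eq_dft, dft_smul_indicator_twoPowSubsetSums hD, sub_self]
    simp only [zero_mul, AddChar.map_zero_eq_one, one_add_one_eq_two, prod_const]
    exact inv_mul_cancel₀ (pow_ne_zero _ two_ne_zero)
  · obtain ⟨hlt, hmul⟩ := padicValNat_two_val_lt_and_mul_two_pow_eq (sub_ne_zero.mpr hgf.symm)
    rw [dft1_eq_dft, dft_smul_indicator_twoPowSubsetSums hD]
    refine mul_eq_zero_of_right _ (prod_eq_zero (mem_image_of_mem _ (mem_image_of_mem _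
      (mem_erase.mpr ⟨hgf, hg⟩))) ?_)
    have := stdAddChar_half (N := 2 ^ m) (k := 2 ^ (m - 1)) (by rw [← pow_succ']; congr; omega)
    push_cast at this
    rw [hmul, this, neg_add_cancel]
  · rw [ncard_support_smul_indicator_twoPowSubsetSums hD, hDw]

theorem stmt1 (m : ℕ) (hm : 1 ≤ m) (n : ℕ) (hn : n = 2 ^ m) [NeZero n]
    (S : Finset (ZMod n)) (hS : S.Nonempty) (f : ZMod n) (hf : f ∈ S)
    (w : ℕ)
    (hw : w = ((S.erase f).image (fun g => padicValNat 2 ((f - g : ZMod n).val))).card) :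
    ∃ G : ZMod n → ℂ,
      dft1 n G f = 1 ∧ (∀ g ∈ S, g ≠ f → dft1 n G g = 0) ∧
      (Function.support G).ncard = 2 ^ w :=
  stmt1_general m n hn S f w hw
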